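/- For every positive integer m, one has ∫₀¹ |S_m(ω)| dω ≥ ∫₀¹ |W_{2m−1}(ω)| dω − ∫₀¹ |W_{m−1}(ω)| dω, where W_0 ≡ 0. -/

import Mathlib

/-! Writing `j ∈ [1, 2m-1]` as `2k-1` or `2k`, the identities `(2k-1)² = 4(k²-k) + 1` and
`(2k)² = 4k²` give `W_{2m-1}(ω) = e(ω) S_m(4ω) + W_{m-1}(4ω)` with `|e(ω)| = 1`. The triangle
inequality and the fact that `ω ↦ 4ω` preserves the integral of a 1-periodic function over
`[0, 1]` finish the proof. -/

open MeasureTheory Real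

/-- The quadratic Weyl sum `S_m(ω) = ∑_{j=1}^m exp(2πiω(j²-j))`. -/
noncomputable def S (ω : ℝ) (m : ℕ) : ℂ :=
  ∑ j ∈ Finset.Icc 1 m,
    Complex.exp (2 * (Real.pi : ℂ) * Complex.I * (ω : ℂ) * ((j : ℂ) ^ 2 - (j : ℂ)))

/-- The purely quadratic Weyl sum `W_m(ω) = ∑_{j=1}^m exp(2πiωj²)`, with `W_0 = 0`. -/
noncomputable def W (ω : ℝ) (m : ℕ) : ℂ :=
  ∑ j ∈ Finset.Icc 1 m,
    Complex.exp (2 * (Real.pi : ℂ) * Complex.I * (ω : ℂ) * (j : ℂ) ^ 2)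

theorem Finset.sum_Icc_two_mul_sub_one {M : Type*} [AddCommMonoid M] (f : ℕ → M) (m : ℕ) :
    ∑ j ∈ Finset.Icc 1 (2 * m - 1), f j
      = ∑ k ∈ Finset.Icc 1 m, f (2 * k - 1) + ∑ k ∈ Finset.Icc 1 (m - 1), f (2 * k) := by
  rcases m with _ | m
  · simp
  induction m with
  | zero => simp
  | succ m ih =>
    have h1 := Finset.sum_Icc_succ_top (show 1 ≤ 2 * (m + 1) - 1 + 1 by omega) f
    have h2 := Finset.sum_Icc_succ_top (show 1 ≤ 2 * (m + 1) - 1 + 1 + 1 by omega) f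
    have h3 := Finset.sum_Icc_succ_top (show 1 ≤ m + 1 + 1 by omega) (fun k => f (2 * k - 1))
    have h4 := Finset.sum_Icc_succ_top (show 1 ≤ m + 1 by omega) (fun k => f (2 * k))
    simp only [Nat.add_sub_cancel] at ih h1 h2 h3 h4 ⊢
    rw [show 2 * (m + 1 + 1) - 1 = 2 * (m + 1) - 1 + 1 + 1 by omega, h2, h1, ih, h3, h4,
      show 2 * (m + 1) - 1 + 1 = 2 * (m + 1) by omega,
      show 2 * (m + 1 + 1) - 1 = 2 * (m + 1) + 1 by omega]
    abel

theorem Function.Periodic.intervalIntegral_comp_nat_mul {E : Type*} [NormedAddCommGroup E]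
    [NormedSpace ℝ E] {f : ℝ → E} {T : ℝ} (hf : Function.Periodic f T)
    (hfi : ∀ t₁ t₂, IntervalIntegrable f volume t₁ t₂) {n : ℕ} (hn : n ≠ 0) :
    ∫ x in (0:ℝ)..T, f (n * x) = ∫ x in (0:ℝ)..T, f x := by
  have hn' : (n : ℝ) ≠ 0 := Nat.cast_ne_zero.2 hn
  have h := hf.intervalIntegral_add_zsmul_eq n 0 hfi
  simp only [zero_add, natCast_zsmul, ← Nat.cast_smul_eq_nsmul ℝ, smul_eq_mul] at h
  rw [intervalIntegral.integral_comp_mul_left f hn', mul_zero, h, inv_smul_smul₀ hn']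

theorem periodic_cexp_two_pi_I_mul_int (n : ℤ) :
    Function.Periodic (fun ω : ℝ => Complex.exp (2 * π * Complex.I * ω * n)) 1 := fun ω => by
  dsimp only
  rw [show 2 * π * Complex.I * ↑(ω + 1) * n
      = 2 * π * Complex.I * ω * n + n * (2 * π * Complex.I) by push_cast; ring,
    Complex.exp_add, Complex.exp_int_mul_two_pi_mul_I, mul_one]

theorem S_continuous (m : ℕ) : Continuous fun ω => S ω m := by
  unfold S; fun_prop

theorem W_continuous (m : ℕ) : Continuous fun ω => W ω m := by
  unfold W; fun_prop

theorem S_periodic (m : ℕ) : Function.Periodic (fun ω => S ω m) 1 := by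
  have h := Finset.periodic_sum (Finset.Icc 1 m) fun j _ =>
    periodic_cexp_two_pi_I_mul_int ((j : ℤ) ^ 2 - j)
  simpa [S] using h

theorem W_periodic (m : ℕ) : Function.Periodic (fun ω => W ω m) 1 := by
  have h := Finset.periodic_sum (Finset.Icc 1 m) fun j _ =>
    periodic_cexp_two_pi_I_mul_int ((j : ℤ) ^ 2)
  simpa [W] using h

theorem W_two_mul_sub_one (ω : ℝ) (m : ℕ) :
    W ω (2 * m - 1)
      = Complex.exp (2 * π * Complex.I * ω) * S (4 * ω) m + W (4 * ω) (m - 1) := by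
  rw [W, Finset.sum_Icc_two_mul_sub_one, S, W, Finset.mul_sum]
  congr 1
  · refine Finset.sum_congr rfl fun k hk => ?_
    rw [← Complex.exp_add, Nat.cast_sub (by grind)]
    push_cast
    ring_nf
  · refine Finset.sum_congr rfl fun k _ => ?_
    push_cast
    ring_nf

theorem norm_W_two_mul_sub_one_le (ω : ℝ) (m : ℕ) :
    ‖W ω (2 * m - 1)‖ ≤ ‖S (4 * ω) m‖ + ‖W (4 * ω) (m - 1)‖ := by
  have h : ‖Complex.exp (2 * π * Complex.I * ω)‖ = 1 := by
    simpa [mul_comm, mul_left_comm, mul_assoc] using Complex.norm_exp_ofReal_mul_I (2 * π * ω)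
  calc ‖W ω (2 * m - 1)‖
      = ‖Complex.exp (2 * π * Complex.I * ω) * S (4 * ω) m + W (4 * ω) (m - 1)‖ := by
        rw [W_two_mul_sub_one]
    _ ≤ ‖Complex.exp (2 * π * Complex.I * ω) * S (4 * ω) m‖ + ‖W (4 * ω) (m - 1)‖ :=
        norm_add_le _ _
    _ = ‖S (4 * ω) m‖ + ‖W (4 * ω) (m - 1)‖ := by rw [norm_mul, h, one_mul]

theorem stmt_13_general (m : ℕ) :
    (∫ ω in (0:ℝ)..1, ‖W ω (2 * m - 1)‖) - ∫ ω in (0:ℝ)..1, ‖W ω (m - 1)‖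
      ≤ ∫ ω in (0:ℝ)..1, ‖S ω m‖ := by
  have hS := (S_continuous m).norm
  have hW := (W_continuous (m - 1)).norm
  have hS4 : Continuous fun ω : ℝ => ‖S (4 * ω) m‖ := hS.comp (continuous_const_mul _)
  have hW4 : Continuous fun ω : ℝ => ‖W (4 * ω) (m - 1)‖ := hW.comp (continuous_const_mul _)
  have hS_rescale :
      ∫ ω in (0:ℝ)..1, ‖S (4 * ω) m‖ = ∫ ω in (0:ℝ)..1, ‖S ω m‖ := by
    exact_mod_cast ((S_periodic m).comp norm).intervalIntegral_comp_nat_mul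
      hS.intervalIntegrable (n := 4) four_ne_zero
  have hW_rescale :
      ∫ ω in (0:ℝ)..1, ‖W (4 * ω) (m - 1)‖ = ∫ ω in (0:ℝ)..1, ‖W ω (m - 1)‖ := by
    exact_mod_cast ((W_periodic (m - 1)).comp norm).intervalIntegral_comp_nat_mul
      hW.intervalIntegrable (n := 4) four_ne_zero
  rw [sub_le_iff_le_add]
  calc ∫ ω in (0:ℝ)..1, ‖W ω (2 * m - 1)‖
      ≤ ∫ ω in (0:ℝ)..1, (‖S (4 * ω) m‖ + ‖W (4 * ω) (m - 1)‖) :=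
        intervalIntegral.integral_mono_on zero_le_one
          ((W_continuous _).norm.intervalIntegrable _ _) ((hS4.add hW4).intervalIntegrable _ _)
          fun ω _ => norm_W_two_mul_sub_one_le ω m
    _ = (∫ ω in (0:ℝ)..1, ‖S ω m‖) + ∫ ω in (0:ℝ)..1, ‖W ω (m - 1)‖ := by
        rw [intervalIntegral.integral_add (hS4.intervalIntegrable _ _)
          (hW4.intervalIntegrable _ _), hS_rescale, hW_rescale]

/-- `∫₀¹ |S_m(ω)| dω ≥ ∫₀¹ |W_{2m-1}(ω)| dω - ∫₀¹ |W_{m-1}(ω)| dω`. -/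
theorem stmt_13 (m : ℕ) (hm : 1 ≤ m) :
    (∫ ω in (0:ℝ)..1, ‖W ω (2 * m - 1)‖) - ∫ ω in (0:ℝ)..1, ‖W ω (m - 1)‖
      ≤ ∫ ω in (0:ℝ)..1, ‖S ω m‖ :=
  stmt_13_general m
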